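/- Let D be a domain in ℝ^N, N ≥ 2, let u : D → [-∞, +∞) be K₁-quasinearly subharmonic n.s. and let -u be K₂-quasinearly subharmonic n.s. If there exists y₀ ∈ D with u(y₀) > 0, then K₁ ≥ K₂. -/

import Mathlib

open MeasureTheory Metric
open scoped ENNReal

noncomputable section

/-- `ℝ^N` as Euclidean space. -/
abbrev Euc (N : ℕ) := EuclideanSpace ℝ (Fin N)

/-- `ν_N`: the volume of the unit ball in `ℝ^N`. -/
noncomputable def unitBallVol (N : ℕ) : ℝ := (volume (ball (0 : Euc N) 1)).toReal

/-- Positive part of an extended real, valued in `ℝ≥0∞`. -/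
noncomputable def epos (x : EReal) : ℝ≥0∞ := if x = ⊤ then ⊤ else ENNReal.ofReal x.toReal

/-- The extended-real valued Lebesgue integral of `u` over `s`
(well defined whenever the positive part is integrable). -/
noncomputable def esetInt {N : ℕ} (u : Euc N → EReal) (s : Set (Euc N)) : EReal :=
  ((∫⁻ y in s, epos (u y)) : ℝ≥0∞) - ((∫⁻ y in s, epos (-(u y))) : ℝ≥0∞)

/-- The generalized sub-mean-value inequality
`u(x) ≤ K/(ν_N r^N) ∫_{B(x,r)} u dm_N` over all closed balls contained in `D`. -/
def SubMeanIneq {N : ℕ} (K : ℝ) (D : Set (Euc N)) (u : Euc N → EReal) : Prop :=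
  ∀ x r, 0 < r → closedBall x r ⊆ D →
    u x ≤ ((K / (unitBallVol N * r ^ N) : ℝ) : EReal) * esetInt u (ball x r)

/-- `u` is `K`-quasinearly subharmonic n.s. (in the narrow sense) on `D`:
`u` is measurable, `u⁺ ∈ L¹_loc(D)`, `u < +∞` and the sub-mean-value
inequality with constant `K` holds on all closed balls in `D`. -/
def QNSns {N : ℕ} (K : ℝ) (D : Set (Euc N)) (u : Euc N → EReal) : Prop :=
  1 ≤ K ∧ AEMeasurable u (volume.restrict D) ∧ (∀ x ∈ D, u x < ⊤) ∧
  LocallyIntegrableOn (fun y => ((u y) ⊔ 0).toReal) D volume ∧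
  SubMeanIneq K D u

/-- The family of inequalities (for every `M ≥ 0`, applied to `u_M = max (u, -M) + M`)
defining `K`-quasinearly subharmonic functions. -/
def QNSIneqFull {N : ℕ} (K : ℝ) (D : Set (Euc N)) (u : Euc N → EReal) : Prop :=
  ∀ M : ℝ, 0 ≤ M → ∀ x r, 0 < r → closedBall x r ⊆ D →
    (u x ⊔ ((-M : ℝ) : EReal)) + (M : EReal) ≤
      ((K / (unitBallVol N * r ^ N) : ℝ) : EReal) *
        ((∫⁻ y in ball x r, epos ((u y ⊔ ((-M : ℝ) : EReal)) + (M : EReal))) : ℝ≥0∞)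

/-- `u` is `K`-quasinearly subharmonic on `D`. -/
def QNSfull {N : ℕ} (K : ℝ) (D : Set (Euc N)) (u : Euc N → EReal) : Prop :=
  1 ≤ K ∧ AEMeasurable u (volume.restrict D) ∧ (∀ x ∈ D, u x < ⊤) ∧
  LocallyIntegrableOn (fun y => ((u y) ⊔ 0).toReal) D volume ∧
  QNSIneqFull K D u

/-- `u ∈ L¹_loc(D)` for an extended-real valued `u`. -/
def LocIntE {N : ℕ} (u : Euc N → EReal) (D : Set (Euc N)) : Prop :=
  ∀ k, k ⊆ D → IsCompact k → (∫⁻ y in k, epos (u y) + epos (-(u y))) < ⊤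

/-- The sub-mean-value inequality for real-valued functions. -/
def SubMeanIneqR {N : ℕ} (K : ℝ) (D : Set (Euc N)) (u : Euc N → ℝ) : Prop :=
  ∀ x r, 0 < r → closedBall x r ⊆ D →
    u x ≤ (K / (unitBallVol N * r ^ N)) * ∫ y in ball x r, u y

/-- The quasinearly subharmonicity inequalities (for every `M ≥ 0`,
applied to `u_M = max (u, -M) + M`) for real-valued functions. -/
def QNSIneqFullR {N : ℕ} (K : ℝ) (D : Set (Euc N)) (u : Euc N → ℝ) : Prop :=
  ∀ M : ℝ, 0 ≤ M → ∀ x r, 0 < r → closedBall x r ⊆ D →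
    max (u x) (-M) + M ≤
      (K / (unitBallVol N * r ^ N)) * ∫ y in ball x r, (max (u y) (-M) + M)

/-- `u : D → [-∞, +∞)` is harmonic on `D`: it is finite (real-valued) on `D`,
continuous on `D`, and satisfies the mean value equality on all closed balls in `D`. -/
def IsHarmonicOn {N : ℕ} (D : Set (Euc N)) (u : Euc N → EReal) : Prop :=
  (∀ x ∈ D, u x ≠ ⊥ ∧ u x ≠ ⊤) ∧ ContinuousOn (fun x => (u x).toReal) D ∧
  ∀ x r, 0 < r → closedBall x r ⊆ D →
    (u x).toReal = (1 / (unitBallVol N * r ^ N)) * ∫ y in ball x r, (u y).toReal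

end

/-! On a ball `B = B(y₀, r)` with closure in `D`, the local integrability of `u⁺` and of
`(-u)⁺` makes `A = ∫_B u` a real number. With `V = ν_N r^N`, the mean-value inequalities for
`u` and `-u` at `y₀` give `K₂ A / V ≤ u(y₀) ≤ K₁ A / V`; as `u(y₀) > 0` and `K₁ ≥ 1`, this forces
`A > 0`, hence `K₂ ≤ K₁`. -/

lemma epos_eq_ofReal_toReal_sup {x : EReal} (hx : x ≠ ⊤) :
    epos x = ENNReal.ofReal (x ⊔ 0).toReal := by
  rw [epos, if_neg hx]
  induction x using EReal.rec with
  | bot => simp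
  | coe r =>
    rw [← EReal.coe_zero, ← EReal.coe_strictMono.monotone.map_max, EReal.toReal_coe,
      EReal.toReal_coe, ENNReal.ofReal_max, ENNReal.ofReal_zero, max_eq_left zero_le]
  | top => exact absurd rfl hx

lemma setLIntegral_epos_lt_top {X : Type*} [MeasurableSpace X] [TopologicalSpace X]
    [OpensMeasurableSpace X] [T2Space X] {μ : Measure X} {D k : Set X} {u : X → EReal}
    (hloc : LocallyIntegrableOn (fun y => ((u y) ⊔ 0).toReal) D μ) (hfin : ∀ x ∈ D, u x < ⊤)
    (hk : IsCompact k) (hkD : k ⊆ D) :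
    ∫⁻ y in k, epos (u y) ∂μ < ⊤ := by
  calc ∫⁻ y in k, epos (u y) ∂μ
      = ∫⁻ y in k, ENNReal.ofReal (u y ⊔ 0).toReal ∂μ :=
        setLIntegral_congr_fun hk.measurableSet fun y hy ↦
          epos_eq_ofReal_toReal_sup (hfin y (hkD hy)).ne
    _ ≤ ∫⁻ y in k, ‖(u y ⊔ 0).toReal‖ₑ ∂μ := lintegral_ofReal_le_lintegral_enorm _
    _ < ⊤ := (hloc.integrableOn_compact_subset hkD hk).2

lemma esetInt_eq_coe_toReal_sub {N : ℕ} {u : Euc N → EReal} {s : Set (Euc N)}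
    (hpos : ∫⁻ y in s, epos (u y) < ⊤) (hneg : ∫⁻ y in s, epos (-(u y)) < ⊤) :
    esetInt u s = ↑((∫⁻ y in s, epos (u y)).toReal - (∫⁻ y in s, epos (-(u y))).toReal) := by
  rw [esetInt, EReal.coe_sub, EReal.coe_ennreal_toReal hpos.ne, EReal.coe_ennreal_toReal hneg.ne]

lemma esetInt_neg {N : ℕ} {u : Euc N → EReal} {s : Set (Euc N)}
    (hpos : ∫⁻ y in s, epos (u y) < ⊤) (hneg : ∫⁻ y in s, epos (-(u y)) < ⊤) :
    esetInt (fun y => -(u y)) s = -esetInt u s := by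
  rw [esetInt_eq_coe_toReal_sub hpos hneg, esetInt_eq_coe_toReal_sub (u := fun y => -(u y))
    hneg (by simpa only [neg_neg] using hpos)]
  simp only [neg_neg, ← EReal.coe_neg, neg_sub]

lemma unitBallVol_pos (N : ℕ) : 0 < unitBallVol N :=
  ENNReal.toReal_pos (measure_ball_pos volume 0 one_pos).ne' measure_ball_lt_top.ne

lemma QNSns.setLIntegral_epos_ball_lt_top {N : ℕ} {K : ℝ} {D : Set (Euc N)} {u : Euc N → EReal}
    (hu : QNSns K D u) {x : Euc N} {r : ℝ} (hr : closedBall x r ⊆ D) :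
    ∫⁻ y in ball x r, epos (u y) < ⊤ :=
  (lintegral_mono_set ball_subset_closedBall).trans_lt
    (setLIntegral_epos_lt_top hu.2.2.2.1 hu.2.2.1 (isCompact_closedBall x r) hr)

theorem qnsns_const_comparison_general {N : ℕ}
    (D : Set (Euc N)) (hDopen : IsOpen D)
    (K₁ K₂ : ℝ) (u : Euc N → EReal)
    (hu : QNSns K₁ D u) (hnu : QNSns K₂ D (fun x => -(u x)))
    (y₀ : Euc N) (hy₀ : y₀ ∈ D) (hpos : 0 < u y₀) :
    K₂ ≤ K₁ := by
  obtain ⟨r, hr, hrD⟩ := nhds_basis_closedBall.mem_iff.1 (hDopen.mem_nhds hy₀)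
  have hP := hu.setLIntegral_epos_ball_lt_top hrD
  have hQ := hnu.setLIntegral_epos_ball_lt_top hrD
  obtain ⟨hK₁, -, -, -, hmean₁⟩ := hu
  obtain ⟨-, -, -, -, hmean₂⟩ := hnu
  set A := (∫⁻ y in ball y₀ r, epos (u y)).toReal - (∫⁻ y in ball y₀ r, epos (-(u y))).toReal
  have hA : esetInt u (ball y₀ r) = A := esetInt_eq_coe_toReal_sub hP hQ
  have hV : 0 < unitBallVol N * r ^ N := by have := unitBallVol_pos N; positivity
  have hupper : u y₀ ≤ ↑(K₁ / (unitBallVol N * r ^ N) * A) := by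
    simpa only [hA, EReal.coe_mul] using hmean₁ y₀ r hr hrD
  have hlower : ↑(K₂ / (unitBallVol N * r ^ N) * A) ≤ u y₀ := by
    have := hmean₂ y₀ r hr hrD
    rw [esetInt_neg hP hQ, hA, ← EReal.coe_neg, ← EReal.coe_mul, mul_neg, EReal.coe_neg] at this
    exact EReal.neg_le_neg_iff.1 this
  have hK₁A : 0 < K₁ / (unitBallVol N * r ^ N) * A := EReal.coe_pos.1 (hpos.trans_le hupper)
  have hApos : 0 < A := pos_of_mul_pos_right hK₁A (div_nonneg (by linarith) hV.le)
  exact (div_le_div_iff_of_pos_right hV).1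
    (le_of_mul_le_mul_right (EReal.coe_le_coe_iff.1 (hlower.trans hupper)) hApos)

/-- if `u` is K₁-quasinearly subharmonic n.s., `-u` is
K₂-quasinearly subharmonic n.s., and `u(y₀) > 0` for some `y₀ ∈ D`,
then `K₁ ≥ K₂`. -/
theorem qnsns_const_comparison {N : ℕ} (hN : 2 ≤ N)
    (D : Set (Euc N)) (hDopen : IsOpen D) (hDconn : IsConnected D)
    (K₁ K₂ : ℝ) (u : Euc N → EReal)
    (hu : QNSns K₁ D u) (hnu : QNSns K₂ D (fun x => -(u x)))
    (y₀ : Euc N) (hy₀ : y₀ ∈ D) (hpos : 0 < u y₀) :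
    K₂ ≤ K₁ :=
  qnsns_const_comparison_general D hDopen K₁ K₂ u hu hnu y₀ hy₀ hpos
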